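/- arXiv:2205.10573 — 7 statements merged into one kernel-verified Lean document; each statement's English description precedes it below -/
import Mathlib

section
/- Let N ≥ 1 be an integer. Define f : [-1,1] → ℝ by f(x) = ReLU(cos(πNx)) and g : [-1,1] → ℝ by g(x) = 1/π + cos(πNx)/2. Then the relative L² aliasing error ‖f − g‖_{L²(-1,1)} / ‖f‖_{L²(-1,1)} equals (1/π)·√(π²/2 − 4). -/
open Real MeasureTheory intervalIntegral

/-!
The substitution `t = π N x` turns an integral of `φ (cos (π N x))` over `[-1, 1]` into `1 / π`
times an integral of `φ ∘ cos` over one period. Since `y * max y 0 = (max y 0) ^ 2`, the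
pointwise identity `(f - g) ^ 2 = g ^ 2 - (2 / π) f` holds, so
`‖f - g‖² = ‖g‖² - (2 / π) ∫ f = (2 / π² + 1 / 4) - 4 / π²`, while `‖f‖² = 1 / 2`.
-/

theorem Function.Periodic.intervalIntegral_comp_pi_mul_natCast {E : Type*}
    [NormedAddCommGroup E] [NormedSpace ℝ E] {h : ℝ → E} (hper : Function.Periodic h (2 * π))
    (hint : ∀ a b, IntervalIntegrable h volume a b) {N : ℕ} (hN : N ≠ 0) (a : ℝ) :
    ∫ x in (-1 : ℝ)..1, h (π * N * x) = π⁻¹ • ∫ t in a..a + 2 * π, h t := by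
  have hπN : π * N ≠ 0 := by positivity
  have hend : π * N * 1 = π * N * (-1) + (N : ℤ) • (2 * π) := by
    rw [zsmul_eq_mul, Int.cast_natCast]; ring
  rw [integral_comp_mul_left h hπN, hend, hper.intervalIntegral_add_zsmul_eq _ _ hint,
    hper.intervalIntegral_add_eq _ a, ← Int.cast_smul_eq_zsmul ℝ, smul_smul]
  congr 1
  push_cast
  field_simp

theorem integral_comp_cos_pi_mul_natCast {E : Type*} [NormedAddCommGroup E] [NormedSpace ℝ E]
    {φ : ℝ → E} (hφ : Continuous φ) {N : ℕ} (hN : N ≠ 0) (a : ℝ) :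
    ∫ x in (-1 : ℝ)..1, φ (cos (π * N * x)) = π⁻¹ • ∫ t in a..a + 2 * π, φ (cos t) :=
  (cos_periodic.comp φ).intervalIntegral_comp_pi_mul_natCast
    (fun _ _ => (hφ.comp continuous_cos).intervalIntegrable _ _) hN a

theorem integral_comp_max_cos_zero {E : Type*} [NormedAddCommGroup E] [NormedSpace ℝ E]
    {φ : ℝ → E} (hφ : Continuous φ) (hφ0 : φ 0 = 0) :
    ∫ t in -(π / 2)..-(π / 2) + 2 * π, φ (max (cos t) 0) = ∫ t in -(π / 2)..π / 2, φ (cos t) := by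
  have hint : ∀ a b, IntervalIntegrable (fun t => φ (max (cos t) 0)) volume a b := fun a b =>
    (hφ.comp (continuous_cos.max continuous_const)).intervalIntegrable a b
  have hpos : ∫ t in -(π / 2)..π / 2, φ (max (cos t) 0) = ∫ t in -(π / 2)..π / 2, φ (cos t) :=
    integral_congr fun t ht => by
      rw [Set.uIcc_of_le (by linarith [pi_pos])] at ht
      simp only [max_eq_left (cos_nonneg_of_mem_Icc ht)]
  have hneg : ∫ t in π / 2..-(π / 2) + 2 * π, φ (max (cos t) 0) = 0 := by
    rw [integral_congr (g := fun _ => 0), intervalIntegral.integral_zero]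
    intro t ht
    rw [Set.uIcc_of_le (by linarith [pi_pos])] at ht
    simp only [max_eq_right (cos_nonpos_of_pi_div_two_le_of_le ht.1 (by linarith [ht.2])), hφ0]
  rw [← integral_add_adjacent_intervals (hint _ (π / 2)) (hint _ _), hpos, hneg, add_zero]

theorem integral_sq_add_mul_cos_period (c d a : ℝ) :
    ∫ t in a..a + 2 * π, (c + d * cos t) ^ 2 = 2 * π * c ^ 2 + π * d ^ 2 := by
  have hexp : ∀ t, (c + d * cos t) ^ 2 = c ^ 2 + 2 * c * d * cos t + d ^ 2 * cos t ^ 2 :=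
    fun t => by ring
  simp_rw [hexp]
  have hint : ∀ u : ℝ → ℝ, Continuous u → IntervalIntegrable u volume a (a + 2 * π) :=
    fun u hu => hu.intervalIntegrable _ _
  rw [intervalIntegral.integral_add (hint _ (by fun_prop)) (hint _ (by fun_prop)),
    intervalIntegral.integral_add (hint _ (by fun_prop)) (hint _ (by fun_prop)),
    intervalIntegral.integral_const, intervalIntegral.integral_const_mul,
    intervalIntegral.integral_const_mul, integral_cos, integral_cos_sq,
    sin_add_two_pi, cos_add_two_pi, smul_eq_mul]
  ring

theorem sq_max_zero_sub_const_add_half (c y : ℝ) :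
    (max y 0 - (c + y / 2)) ^ 2 = (c + y / 2) ^ 2 - 2 * c * max y 0 := by
  rcases le_total 0 y with hy | hy
  · rw [max_eq_left hy]; ring
  · rw [max_eq_right hy]; ring

theorem integral_sq_max_cos_pi_mul_natCast {N : ℕ} (hN : N ≠ 0) :
    ∫ x in (-1 : ℝ)..1, max (cos (π * N * x)) 0 ^ 2 = 1 / 2 := by
  rw [integral_comp_cos_pi_mul_natCast (φ := fun y => max y 0 ^ 2) (by fun_prop) hN (-(π / 2)),
    integral_comp_max_cos_zero (φ := (· ^ 2)) (by fun_prop) (by norm_num), integral_cos_sq,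
    cos_pi_div_two, cos_neg, cos_pi_div_two, smul_eq_mul]
  field_simp
  ring

theorem integral_max_cos_pi_mul_natCast {N : ℕ} (hN : N ≠ 0) :
    ∫ x in (-1 : ℝ)..1, max (cos (π * N * x)) 0 = 2 / π := by
  rw [integral_comp_cos_pi_mul_natCast (φ := fun y => max y 0) (by fun_prop) hN (-(π / 2)),
    integral_comp_max_cos_zero (φ := fun y => y) continuous_id rfl, integral_cos, sin_neg,
    sin_pi_div_two, smul_eq_mul]
  ring

theorem integral_sq_add_mul_cos_pi_mul_natCast (c d : ℝ) {N : ℕ} (hN : N ≠ 0) :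
    ∫ x in (-1 : ℝ)..1, (c + d * cos (π * N * x)) ^ 2 = 2 * c ^ 2 + d ^ 2 := by
  rw [integral_comp_cos_pi_mul_natCast (φ := fun y => (c + d * y) ^ 2) (by fun_prop) hN 0,
    integral_sq_add_mul_cos_period, smul_eq_mul]
  field_simp

theorem integral_sq_max_cos_pi_mul_natCast_sub {N : ℕ} (hN : N ≠ 0) :
    ∫ x in (-1 : ℝ)..1, (max (cos (π * N * x)) 0 - (1 / π + cos (π * N * x) / 2)) ^ 2
      = 1 / 4 - 2 / π ^ 2 := by
  simp_rw [sq_max_zero_sub_const_add_half]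
  rw [intervalIntegral.integral_sub (Continuous.intervalIntegrable (by fun_prop) _ _)
      (Continuous.intervalIntegrable (by fun_prop) _ _),
    intervalIntegral.integral_const_mul, integral_max_cos_pi_mul_natCast hN]
  simp_rw [div_eq_inv_mul (cos _)]
  rw [integral_sq_add_mul_cos_pi_mul_natCast _ _ hN]
  field_simp
  ring

/-- For the rectified cosine `f x = ReLU (cos (π N x))` and its low-frequency
part `g x = 1/π + cos (π N x) / 2`, the relative L² aliasing error on `[-1, 1]` equals
`(1/π) * √(π²/2 - 4)`. -/
theorem relu_cos_aliasing_error (N : ℕ) (hN : 1 ≤ N) (f g : ℝ → ℝ)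
    (hf : ∀ x, f x = max (Real.cos (π * N * x)) 0)
    (hg : ∀ x, g x = 1 / π + Real.cos (π * N * x) / 2) :
    Real.sqrt (∫ x in (-1 : ℝ)..1, (f x - g x) ^ 2) /
      Real.sqrt (∫ x in (-1 : ℝ)..1, (f x) ^ 2) =
    (1 / π) * Real.sqrt (π ^ 2 / 2 - 4) := by
  have hN0 : N ≠ 0 := by omega
  have hratio : (1 / 4 - 2 / π ^ 2) / (1 / 2) = (π ^ 2 / 2 - 4) / π ^ 2 := by
    field_simp
    ring
  simp only [hf, hg, integral_sq_max_cos_pi_mul_natCast_sub hN0,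
    integral_sq_max_cos_pi_mul_natCast hN0]
  rw [← sqrt_div' _ (by norm_num), hratio, sqrt_div' _ (sq_nonneg π), sqrt_sq pi_pos.le]
  ring
end

section
/- Let N ≥ 1 be an integer. Define f : [-1,1] → ℝ by f(x) = ReLU(T_N(x)) and g : [-1,1] → ℝ by g(x) = 1/π + T_N(x)/2, and let ‖h‖_w = (∫_{-1}^{1} h(x)² (1−x²)^{−1/2} dx)^{1/2} be the Chebyshev-weighted L² norm. Then ‖f − g‖_w / ‖f‖_w = (1/π)·√(π²/2 − 4). -/
open Real MeasureTheory intervalIntegral Polynomial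


lemma cos_image_Ioo : Real.cos '' Set.Ioo 0 π = Set.Ioo (-1 : ℝ) 1 := by
  apply Set.Subset.antisymm
  · rintro x ⟨θ, hθ, rfl⟩
    constructor
    · have := Real.strictAntiOn_cos (Set.mem_Icc.2 ⟨le_of_lt hθ.1, le_of_lt hθ.2⟩)
        (Set.mem_Icc.2 ⟨Real.pi_nonneg, le_refl π⟩) hθ.2
      simpa [Real.cos_pi] using this
    · have := Real.strictAntiOn_cos (Set.mem_Icc.2 ⟨le_refl 0, Real.pi_nonneg⟩)
        (Set.mem_Icc.2 ⟨le_of_lt hθ.1, le_of_lt hθ.2⟩) hθ.1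
      simpa [Real.cos_zero] using this
  · have h := intermediate_value_Ioo' (le_of_lt Real.pi_pos) Real.continuous_cos.continuousOn
      (a := 0) (b := π)
    simpa [Real.cos_zero, Real.cos_pi] using h

lemma cheb_subst (G : ℝ → ℝ) :
    (∫ x in (-1 : ℝ)..1, G x * (1 - x ^ 2) ^ (-(1 : ℝ) / 2)) =
      ∫ θ in (0 : ℝ)..π, G (Real.cos θ) := by
  rw [intervalIntegral.integral_of_le (by norm_num : (-1:ℝ) ≤ 1),
    intervalIntegral.integral_of_le Real.pi_nonneg,
    MeasureTheory.integral_Ioc_eq_integral_Ioo, MeasureTheory.integral_Ioc_eq_integral_Ioo,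
    ← cos_image_Ioo]
  rw [MeasureTheory.integral_image_eq_integral_abs_deriv_smul measurableSet_Ioo
      (f' := fun θ => -Real.sin θ)
      (fun θ _ => (Real.hasDerivAt_cos θ).hasDerivWithinAt)
      (Real.injOn_cos.mono Set.Ioo_subset_Icc_self)]
  apply MeasureTheory.setIntegral_congr_fun measurableSet_Ioo
  intro θ hθ
  have hs : 0 < Real.sin θ := Real.sin_pos_of_pos_of_lt_pi hθ.1 hθ.2
  have h1 : (1 : ℝ) - Real.cos θ ^ 2 = Real.sin θ ^ 2 := by
    have := Real.sin_sq_add_cos_sq θ; linarith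
  have h2 : (Real.sin θ ^ 2 : ℝ) ^ (-(1 : ℝ) / 2) = (Real.sin θ)⁻¹ := by
    rw [← Real.rpow_natCast (Real.sin θ) 2, ← Real.rpow_mul hs.le]
    norm_num
    exact (Real.rpow_neg_one _).trans rfl
  simp only [smul_eq_mul, abs_neg, abs_of_pos hs, h1, h2]
  field_simp

lemma cos_reflect (G : ℝ → ℝ) :
    (∫ θ in (0 : ℝ)..π, G (-Real.cos θ)) = ∫ θ in (0 : ℝ)..π, G (Real.cos θ) := by
  have h := intervalIntegral.integral_comp_sub_left (fun t => G (Real.cos t)) π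
    (a := 0) (b := π)
  simp only [Real.cos_pi_sub, sub_self, sub_zero] at h
  exact h

lemma cos_period (G : ℝ → ℝ) (k : ℕ) :
    (∫ θ in ((k : ℝ) * π)..(((k : ℝ) + 1) * π), G (Real.cos θ)) =
      ∫ θ in (0 : ℝ)..π, G (Real.cos θ) := by
  have h := intervalIntegral.integral_comp_add_left (fun t => G (Real.cos t))
    ((k : ℝ) * π) (a := 0) (b := π)
  rw [add_zero] at h
  rw [show ((k : ℝ) + 1) * π = (k : ℝ) * π + π by ring, ← h]
  have hc : ∀ t : ℝ, Real.cos ((k : ℝ) * π + t) = (-1) ^ k * Real.cos t := by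
    intro t
    rw [show (k : ℝ) * π + t = (k : ℝ) * π - (-t) by ring, Real.cos_nat_mul_pi_sub,
      Real.cos_neg]
  simp only [hc]
  rcases Nat.even_or_odd k with hk | hk
  · simp [hk.neg_one_pow]
  · simp only [hk.neg_one_pow, neg_one_mul]
    exact cos_reflect G

lemma cos_multi (G : ℝ → ℝ) (hG : Continuous G) (n : ℕ) :
    (∫ θ in (0 : ℝ)..((n : ℝ) * π), G (Real.cos θ)) =
      (n : ℝ) * ∫ θ in (0 : ℝ)..π, G (Real.cos θ) := by
  induction n with
  | zero => simp
  | succ n ih =>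
    have hint : ∀ a b : ℝ, IntervalIntegrable (fun θ => G (Real.cos θ)) volume a b :=
      fun a b => (hG.comp Real.continuous_cos).intervalIntegrable a b
    have := intervalIntegral.integral_add_adjacent_intervals (a := (0:ℝ))
      (b := (n : ℝ) * π) (c := ((n : ℝ) + 1) * π) (hint _ _) (hint _ _)
    push_cast
    rw [← this, ih, cos_period G n]
    ring

lemma cos_fold (G : ℝ → ℝ) (hG : Continuous G) (N : ℕ) (hN : 1 ≤ N) :
    (∫ θ in (0 : ℝ)..π, G (Real.cos ((N : ℝ) * θ))) =
      ∫ θ in (0 : ℝ)..π, G (Real.cos θ) := by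
  have hc : (N : ℝ) ≠ 0 := by positivity
  have h := intervalIntegral.integral_comp_mul_left (fun u => G (Real.cos u))
    (a := 0) (b := π) hc
  rw [h, mul_zero, cos_multi G hG, smul_eq_mul, ← mul_assoc, inv_mul_cancel₀ hc, one_mul]

lemma abs_cos_integral : (∫ u in (0 : ℝ)..π, |Real.cos u|) = 2 := by
  have hint : ∀ a b : ℝ, IntervalIntegrable (fun u => |Real.cos u|) volume a b :=
    fun a b => (Real.continuous_cos.abs).intervalIntegrable a b
  have hsplit := intervalIntegral.integral_add_adjacent_intervals (a := (0:ℝ))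
    (b := π / 2) (c := π) (hint _ _) (hint _ _)
  have h1 : (∫ u in (0 : ℝ)..(π / 2), |Real.cos u|) = ∫ u in (0 : ℝ)..(π / 2), Real.cos u := by
    apply intervalIntegral.integral_congr
    intro u hu
    rw [Set.uIcc_of_le (by positivity : (0:ℝ) ≤ π / 2)] at hu
    exact abs_of_nonneg (Real.cos_nonneg_of_mem_Icc ⟨by linarith [hu.1, Real.pi_pos], hu.2⟩)
  have h2 : (∫ u in (π / 2 : ℝ)..π, |Real.cos u|) = ∫ u in (π / 2 : ℝ)..π, -Real.cos u := by
    apply intervalIntegral.integral_congr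
    intro u hu
    rw [Set.uIcc_of_le (by linarith [Real.pi_pos] : (π/2:ℝ) ≤ π)] at hu
    exact abs_of_nonpos (Real.cos_nonpos_of_pi_div_two_le_of_le hu.1 (by linarith [hu.2, Real.pi_pos]))
  rw [← hsplit, h1, h2, intervalIntegral.integral_neg, integral_cos, integral_cos]
  simp
  norm_num

lemma max_cos_sq_integral : (∫ u in (0 : ℝ)..π, max (Real.cos u) 0 ^ 2) = π / 4 := by
  have hint : ∀ a b : ℝ, IntervalIntegrable (fun u => max (Real.cos u) 0 ^ 2) volume a b :=
    fun a b => (((Real.continuous_cos.max continuous_const).pow 2)).intervalIntegrable a b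
  have hsplit := intervalIntegral.integral_add_adjacent_intervals (a := (0:ℝ))
    (b := π / 2) (c := π) (hint _ _) (hint _ _)
  have h1 : (∫ u in (0 : ℝ)..(π / 2), max (Real.cos u) 0 ^ 2)
      = ∫ u in (0 : ℝ)..(π / 2), Real.cos u ^ 2 := by
    apply intervalIntegral.integral_congr
    intro u hu
    rw [Set.uIcc_of_le (by positivity : (0:ℝ) ≤ π / 2)] at hu
    show (max (Real.cos u) 0) ^ 2 = Real.cos u ^ 2
    rw [max_eq_left (Real.cos_nonneg_of_mem_Icc ⟨by linarith [hu.1, Real.pi_pos], hu.2⟩)]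
  have h2 : (∫ u in (π / 2 : ℝ)..π, max (Real.cos u) 0 ^ 2)
      = ∫ u in (π / 2 : ℝ)..π, (0:ℝ) := by
    apply intervalIntegral.integral_congr
    intro u hu
    rw [Set.uIcc_of_le (by linarith [Real.pi_pos] : (π/2:ℝ) ≤ π)] at hu
    show (max (Real.cos u) 0) ^ 2 = (0:ℝ)
    rw [max_eq_right (Real.cos_nonpos_of_pi_div_two_le_of_le hu.1
      (by linarith [hu.2, Real.pi_pos]))]
    norm_num
  rw [← hsplit, h1, h2, integral_cos_sq]
  simp [Real.cos_pi_div_two]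
  ring

lemma aliasing_integrand : (∫ u in (0 : ℝ)..π, (|Real.cos u| / 2 - 1 / π) ^ 2) = π / 8 - 1 / π := by
  have hpi := Real.pi_pos
  have hexp : ∀ u : ℝ, (|Real.cos u| / 2 - 1 / π) ^ 2
      = Real.cos u ^ 2 / 4 - (1 / π) * |Real.cos u| + 1 / π ^ 2 := by
    intro u
    have h := sq_abs (Real.cos u)
    linear_combination h / 4
  simp only [hexp]
  have i1 : IntervalIntegrable (fun u => Real.cos u ^ 2 / 4) volume 0 π :=
    ((Real.continuous_cos.pow 2).div_const 4).intervalIntegrable 0 π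
  have i2 : IntervalIntegrable (fun u => (1 / π) * |Real.cos u|) volume 0 π :=
    (continuous_const.mul Real.continuous_cos.abs).intervalIntegrable 0 π
  have i3 : IntervalIntegrable (fun _ : ℝ => 1 / π ^ 2) volume 0 π :=
    intervalIntegrable_const
  rw [intervalIntegral.integral_add (i1.sub i2) i3, intervalIntegral.integral_sub i1 i2,
    intervalIntegral.integral_div, intervalIntegral.integral_const_mul, abs_cos_integral,
    integral_cos_sq, intervalIntegral.integral_const]
  simp
  field_simp
  ring

/-- For `f x = ReLU (T_N x)` (with `T_N` the `N`-th Chebyshev polynomial of the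
first kind) and its low-degree part `g x = 1/π + T_N x / 2`, the relative aliasing error in
the Chebyshev-weighted L² norm `‖h‖_w = (∫_{-1}^1 h(x)² (1-x²)^{-1/2} dx)^{1/2}` equals
`(1/π) * √(π²/2 - 4)`. -/
theorem relu_chebyshev_aliasing_error (N : ℕ) (hN : 1 ≤ N) (f g : ℝ → ℝ)
    (hf : ∀ x, f x = max ((Polynomial.Chebyshev.T ℝ N).eval x) 0)
    (hg : ∀ x, g x = 1 / π + (Polynomial.Chebyshev.T ℝ N).eval x / 2) :
    Real.sqrt (∫ x in (-1 : ℝ)..1, (f x - g x) ^ 2 * (1 - x ^ 2) ^ (-(1 : ℝ) / 2)) /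
      Real.sqrt (∫ x in (-1 : ℝ)..1, (f x) ^ 2 * (1 - x ^ 2) ^ (-(1 : ℝ) / 2)) =
    (1 / π) * Real.sqrt (π ^ 2 / 2 - 4) := by
  have hpi := Real.pi_pos
  have hTc : ∀ θ : ℝ, (Polynomial.Chebyshev.T ℝ N).eval (Real.cos θ)
      = Real.cos ((N : ℝ) * θ) := by
    intro θ
    rw [Polynomial.Chebyshev.T_real_cos]
    push_cast
    ring_nf
  -- numerator
  have hfg : ∀ x, (f x - g x) ^ 2
      = (|(Polynomial.Chebyshev.T ℝ N).eval x| / 2 - 1 / π) ^ 2 := by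
    intro x
    rw [hf, hg]
    rcases le_total ((Polynomial.Chebyshev.T ℝ N).eval x) 0 with h | h
    · rw [max_eq_right h, abs_of_nonpos h]; ring
    · rw [max_eq_left h, abs_of_nonneg h]; ring
  have hnum : (∫ x in (-1 : ℝ)..1, (f x - g x) ^ 2 * (1 - x ^ 2) ^ (-(1 : ℝ) / 2))
      = π / 8 - 1 / π := by
    simp only [hfg]
    rw [cheb_subst (fun x => (|(Polynomial.Chebyshev.T ℝ N).eval x| / 2 - 1 / π) ^ 2)]
    simp only [hTc]
    have := cos_fold (fun t => (|t| / 2 - 1 / π) ^ 2)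
      (by continuity) N hN
    rw [this, aliasing_integrand]
  have hden : (∫ x in (-1 : ℝ)..1, (f x) ^ 2 * (1 - x ^ 2) ^ (-(1 : ℝ) / 2)) = π / 4 := by
    simp only [hf]
    rw [cheb_subst (fun x => max ((Polynomial.Chebyshev.T ℝ N).eval x) 0 ^ 2)]
    simp only [hTc]
    have := cos_fold (fun t => max t 0 ^ 2) (by continuity) N hN
    rw [this, max_cos_sq_integral]
  rw [hnum, hden]
  have h8 : (8 : ℝ) < π ^ 2 := by nlinarith [Real.pi_gt_three]
  have hA : (0 : ℝ) ≤ π / 8 - 1 / π := by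
    rw [sub_nonneg, div_le_div_iff₀ hpi (by norm_num : (0:ℝ) < 8)]
    nlinarith
  have hB : (0 : ℝ) ≤ π ^ 2 / 2 - 4 := by nlinarith
  rw [← Real.sqrt_div hA (π / 4)]
  have hval : (π / 8 - 1 / π) / (π / 4) = (π ^ 2 / 2 - 4) / π ^ 2 := by
    field_simp
    ring
  rw [hval, Real.sqrt_div hB (π ^ 2), Real.sqrt_sq Real.pi_nonneg]
  ring
end

section
/- Let N ≥ 1 be an integer and let f(x) = ReLU(cos(πNx)) and g(x) = 1/π + cos(πNx)/2 on [-1,1]. Then for every integer k with |k| ≤ N, ∫_{-1}^{1} (f(x) − g(x)) · e^{−iπkx} dx = 0; that is, g is the L²(-1,1)-orthogonal projection of f onto the span of the trigonometric polynomials e^{iπkx} with |k| ≤ N. -/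
open Real MeasureTheory intervalIntegral Complex

/-!
Since `max c 0 = (c + |c|) / 2`, the difference `f - g` is `|cos (π N x)| / 2 - 1 / π`, which has
period `1 / N`. For `k ≠ 0`, translating by `1 / N` multiplies the integrand by the root of unity
`exp (-iπk / N) ≠ 1` but leaves its integral over the full period `[-1, 1]` unchanged, so that
integral vanishes. For `k = 0` it remains to note that `∫_{-1}^{1} |cos (π N x)| dx = 4 / π`.
-/

theorem max_zero_eq_add_abs_div_two {α : Type*} [Field α] [LinearOrder α] [IsStrictOrderedRing α]
    (c : α) : max c 0 = (c + |c|) / 2 := by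
  rcases le_total c 0 with hc | hc
  · rw [max_eq_right hc, abs_of_nonpos hc]; ring
  · rw [max_eq_left hc, abs_of_nonneg hc]; ring

theorem intervalIntegral_eq_zero_of_add_eq_smul {𝕜 E : Type*} [NontriviallyNormedField 𝕜]
    [NormedAddCommGroup E] [NormedSpace ℝ E] [NormedSpace 𝕜 E] [SMulCommClass ℝ 𝕜 E]
    {F : ℝ → E} {p : ℝ} {ω : 𝕜} {n : ℕ}
    (hshift : ∀ x, F (x + p) = ω • F x) (hωn : ω ^ n = 1) (hω : ω ≠ 1) (a : ℝ) :
    ∫ x in a..a + n * p, F x = 0 := by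
  have hper : Function.Periodic F (n * p) := fun x => by
    have hpow : ∀ m : ℕ, F (x + m * p) = ω ^ m • F x := fun m => by
      induction m with
      | zero => simp
      | succ m ih => rw [Nat.cast_succ, add_one_mul, ← add_assoc, hshift, ih, pow_succ', mul_smul]
    rw [hpow, hωn, one_smul]
  have hfix : ∫ x in a..a + n * p, F x = ω • ∫ x in a..a + n * p, F x :=
    calc ∫ x in a..a + n * p, F x = ∫ x in (a + p)..(a + p) + n * p, F x :=
          hper.intervalIntegral_add_eq a (a + p)
      _ = ∫ x in a..a + n * p, F (x + p) := by
          rw [intervalIntegral.integral_comp_add_right, add_right_comm]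
      _ = ω • ∫ x in a..a + n * p, F x := by
          simp_rw [hshift]; exact intervalIntegral.integral_smul ω _
  have hzero : (1 - ω) • ∫ x in a..a + n * p, F x = 0 := by
    rw [sub_smul, one_smul, ← hfix, sub_self]
  exact (smul_eq_zero.mp hzero).resolve_left (sub_ne_zero.mpr hω.symm)

theorem Function.Periodic.integral_mul_exp_eq_zero_of_not_dvd {φ : ℝ → ℂ} {n : ℕ} (hn : n ≠ 0)
    (hφ : Function.Periodic φ (2 / n)) {k : ℤ} (hk : ¬ (n : ℤ) ∣ k) :
    ∫ x in (-1 : ℝ)..1, φ x * Complex.exp (-(Complex.I * π * k * x)) = 0 := by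
  set ζ := Complex.exp (2 * π * Complex.I / n)
  have hζ : IsPrimitiveRoot ζ n := Complex.isPrimitiveRoot_exp n hn
  have hζk : ζ ^ (-k) ≠ 1 := by
    rwa [Ne, hζ.zpow_eq_one_iff_dvd, Int.dvd_neg]
  have hζkn : (ζ ^ (-k)) ^ n = 1 := by
    rw [← zpow_natCast, ← zpow_mul, mul_comm, zpow_mul, zpow_natCast, hζ.pow_eq_one, one_zpow]
  have hshift : ∀ x : ℝ,
      φ (x + 2 / n) * Complex.exp (-(Complex.I * π * k * ↑(x + 2 / n))) =
        ζ ^ (-k) • (φ x * Complex.exp (-(Complex.I * π * k * x))) := fun x => by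
    have hexp : -(Complex.I * π * k * ↑(x + 2 / n)) =
        (-k : ℤ) * (2 * π * Complex.I / n) + -(Complex.I * π * k * x) := by
      push_cast; field_simp; ring
    rw [hφ, hexp, Complex.exp_add, Complex.exp_int_mul, smul_eq_mul]
    ring
  have hzero := intervalIntegral_eq_zero_of_add_eq_smul (F := fun x : ℝ =>
    φ x * Complex.exp (-(Complex.I * π * k * x))) hshift hζkn hζk (-1)
  rwa [show -1 + (n : ℝ) * (2 / n) = 1 by field_simp; ring] at hzero

theorem integral_abs_cos_add_nat_mul_pi (a : ℝ) (n : ℕ) :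
    ∫ t in a..a + n * π, |Real.cos t| = 2 * n := by
  have hper : Function.Periodic (fun t => |Real.cos t|) π := fun t => by
    simp only [Real.cos_add_pi, abs_neg]
  have hint : ∀ t₁ t₂, IntervalIntegrable (fun t => |Real.cos t|) volume t₁ t₂ :=
    fun _ _ => Real.continuous_cos.abs.intervalIntegrable _ _
  have hhalf : ∫ t in -(π / 2)..π / 2, |Real.cos t| = 2 := by
    rw [intervalIntegral.integral_congr (g := Real.cos) fun t ht => abs_of_nonneg
      (Real.cos_nonneg_of_mem_Icc (by rwa [Set.uIcc_of_le (by linarith [pi_pos])] at ht)),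
      integral_cos, Real.sin_neg, Real.sin_pi_div_two]
    norm_num
  have hperiods := hper.intervalIntegral_add_zsmul_eq n a hint
  rw [zsmul_eq_mul, Int.cast_natCast] at hperiods
  rw [hperiods, hper.intervalIntegral_add_eq a (-(π / 2)), show -(π / 2) + π = π / 2 by ring, hhalf,
    zsmul_eq_mul]
  push_cast; ring

theorem integral_abs_cos_pi_mul (N : ℕ) (hN : N ≠ 0) :
    ∫ x in (-1 : ℝ)..1, |Real.cos (π * N * x)| = 4 / π := by
  have hπN : π * N ≠ 0 := mul_ne_zero pi_ne_zero (Nat.cast_ne_zero.mpr hN)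
  rw [intervalIntegral.integral_comp_mul_left (fun t => |Real.cos t|) hπN,
    show π * N * 1 = π * N * -1 + (2 * N : ℕ) * π by push_cast; ring,
    integral_abs_cos_add_nat_mul_pi, smul_eq_mul]
  field_simp
  push_cast; ring

/-- With `f x = ReLU (cos (π N x))` and `g x = 1/π + cos (π N x)/2`, for every
integer `k` with `|k| ≤ N` the difference `f - g` is L²(-1,1)-orthogonal to `e^{iπkx}`; i.e.,
`g` is the orthogonal projection of `f` onto the trigonometric polynomials of degree ≤ N. -/
theorem relu_cos_low_modes_projection (N : ℕ) (hN : 1 ≤ N) (f g : ℝ → ℝ)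
    (hf : ∀ x, f x = max (Real.cos (π * N * x)) 0)
    (hg : ∀ x, g x = 1 / π + Real.cos (π * N * x) / 2) :
    ∀ k : ℤ, |k| ≤ (N : ℤ) →
      (∫ x in (-1 : ℝ)..1,
        ((f x - g x : ℝ) : ℂ) * Complex.exp (-(Complex.I * π * k * x))) = 0 := by
  intro k hk
  have hN0 : N ≠ 0 := by omega
  have hfg : ∀ x, f x - g x = |Real.cos (π * N * x)| / 2 - 1 / π := fun x => by
    rw [hf, hg, max_zero_eq_add_abs_div_two]; ring
  simp_rw [hfg]
  rcases eq_or_ne k 0 with rfl | hk0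
  · have hcont : Continuous fun x => |Real.cos (π * N * x)| :=
      (Real.continuous_cos.comp (continuous_const.mul continuous_id)).abs
    simp only [Int.cast_zero, mul_zero, zero_mul, neg_zero, Complex.exp_zero, mul_one,
      intervalIntegral.integral_ofReal]
    rw [intervalIntegral.integral_sub ((hcont.div_const 2).intervalIntegrable _ _)
      intervalIntegrable_const, intervalIntegral.integral_div, integral_abs_cos_pi_mul N hN0,
      intervalIntegral.integral_const, smul_eq_mul, Complex.ofReal_eq_zero]
    ring
  · have hper : Function.Periodic (fun x : ℝ => ((|Real.cos (π * N * x)| / 2 - 1 / π : ℝ) : ℂ))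
        (2 / (2 * N : ℕ)) := fun x => by
      have hhalf : π * N * (x + 2 / (2 * N : ℕ)) = π * N * x + π := by push_cast; field_simp
      simp only [hhalf, Real.cos_add_pi, abs_neg]
    refine hper.integral_mul_exp_eq_zero_of_not_dvd (by omega) fun hdvd => hk0 ?_
    exact Int.eq_zero_of_abs_lt_dvd hdvd (by push_cast; omega)
end

section
/- Let N ≥ 1 be an integer and let f(x) = ReLU(T_N(x)) and g(x) = 1/π + T_N(x)/2 on [-1,1]. Then for every integer k with 0 ≤ k ≤ N, ∫_{-1}^{1} (f(x) − g(x)) · T_k(x) · (1−x²)^{−1/2} dx = 0; that is, g is the orthogonal projection of f onto the span of T₀, …, T_N with respect to the Chebyshev weight 1/√(1−x²). -/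
open Real MeasureTheory intervalIntegral Polynomial
open scoped Complex
open Complex (I)

/-!
Substituting `x = cos θ` turns the Chebyshev weight into `dθ` on `[0, π]`, `T_k x` into
`cos kθ` and `f - g` into `|cos Nθ| / 2 - 1 / π`. For `k = 0` both terms integrate to `1`.
For `0 < k < 2N`, translating `θ` by `π / N` preserves `|cos Nθ|` and multiplies `e^{ikθ}` by
`e^{ikπ/N} ≠ 1`, so the integral of `|cos Nθ| e^{ikθ}` over a period vanishes, while
`∫₀^π cos kθ = 0`.
-/

theorem Function.Periodic.intervalIntegral_eq_zero_of_add_eq_smul {𝕜 E : Type*} [RCLike 𝕜]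
    [NormedAddCommGroup E] [NormedSpace 𝕜 E] [NormedSpace ℝ E] [SMulCommClass ℝ 𝕜 E]
    {φ : ℝ → E} {T c : ℝ} {w : 𝕜} (hφ : Function.Periodic φ T)
    (hc : ∀ θ, φ (θ + c) = w • φ θ) (hw : w ≠ 1) (t : ℝ) :
    ∫ θ in t..t + T, φ θ = 0 := by
  have hshift : w • ∫ θ in t..t + T, φ θ = ∫ θ in t..t + T, φ θ := by
    rw [← intervalIntegral.integral_smul]
    simp_rw [← hc]
    rw [integral_comp_add_right, add_right_comm, hφ.intervalIntegral_add_eq]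
  have : (w - 1) • ∫ θ in t..t + T, φ θ = 0 := by rw [sub_smul, one_smul, hshift, sub_self]
  exact (smul_eq_zero.1 this).resolve_left (sub_ne_zero.2 hw)

theorem integral_neg_self_eq_two_mul_of_even {f : ℝ → ℝ} {a : ℝ}
    (heven : ∀ x, f (-x) = f x) (hf : IntervalIntegrable f volume 0 a) :
    ∫ x in -a..a, f x = 2 * ∫ x in 0..a, f x := by
  have hneg : ∫ x in -a..0, f x = ∫ x in 0..a, f x := by
    simpa [heven] using (integral_comp_neg (a := 0) (b := a) f).symm
  have hf' : IntervalIntegrable f volume (-a) 0 := by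
    simpa [heven] using ((IntervalIntegrable.iff_comp_neg).1 hf).symm
  rw [← integral_add_adjacent_intervals hf' hf, hneg, two_mul]

theorem integral_mul_chebyshev_weight_eq_integral_comp_cos (h : ℝ → ℝ) :
    ∫ x in (-1 : ℝ)..1, h x * (1 - x ^ 2) ^ (-(1 : ℝ) / 2) = ∫ θ in 0..π, h (cos θ) := by
  have hcos : cos '' Set.Ioo 0 π = Set.Ioo (-1) 1 := cosPartialHomeomorph.image_source_eq_target
  rw [integral_of_le (by norm_num), integral_of_le pi_pos.le, integral_Ioc_eq_integral_Ioo,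
    integral_Ioc_eq_integral_Ioo, ← hcos,
    integral_image_eq_integral_abs_deriv_smul measurableSet_Ioo
      (fun θ _ => (hasDerivAt_cos θ).hasDerivWithinAt) cosPartialHomeomorph.injOn]
  refine setIntegral_congr_fun measurableSet_Ioo fun θ ⟨h0, hπ⟩ => ?_
  have hsin : 0 < sin θ := sin_pos_of_pos_of_lt_pi h0 hπ
  have hweight : (1 - cos θ ^ 2) ^ (-(1 : ℝ) / 2) = (sin θ)⁻¹ := by
    rw [← sin_sq, ← rpow_natCast, ← rpow_mul hsin.le]
    norm_num [rpow_neg_one]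
  simp only [smul_eq_mul, abs_neg, abs_of_pos hsin, hweight]
  field_simp

theorem abs_cos_periodic : Function.Periodic (fun θ => |cos θ|) π := fun θ => by
  simp only [cos_add_pi, abs_neg]

theorem integral_abs_cos : ∫ θ in 0..π, |cos θ| = 2 := by
  have hhalf : ∫ θ in -(π / 2)..π / 2, |cos θ| = ∫ θ in -(π / 2)..π / 2, cos θ :=
    integral_congr fun θ hθ => abs_of_nonneg <| cos_nonneg_of_mem_Icc <| by
      rwa [Set.uIcc_of_le (by linarith [pi_pos])] at hθ
  have hshift := abs_cos_periodic.intervalIntegral_add_eq (-(π / 2)) 0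
  rw [zero_add, show -(π / 2) + π = π / 2 by ring] at hshift
  rw [← hshift, hhalf, integral_cos, sin_neg, sin_pi_div_two]
  norm_num

theorem integral_abs_cos_nat_mul {N : ℕ} (hN : N ≠ 0) :
    ∫ θ in 0..π, |cos (N * θ)| = 2 := by
  rw [integral_comp_mul_left (fun θ => |cos θ|) (Nat.cast_ne_zero.2 hN), mul_zero]
  have hperiods := abs_cos_periodic.intervalIntegral_add_zsmul_eq N 0 fun _ _ => by
    apply Continuous.intervalIntegrable; fun_prop
  simp only [zero_add, zsmul_eq_mul, Int.cast_natCast] at hperiods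
  rw [hperiods, integral_abs_cos, smul_eq_mul]
  field_simp

theorem integral_cos_nat_mul {k : ℕ} (hk : k ≠ 0) : ∫ θ in 0..π, cos (k * θ) = 0 := by
  rw [integral_comp_mul_left cos (Nat.cast_ne_zero.2 hk), integral_cos, sin_nat_mul_pi]
  simp

theorem cexp_nat_mul_pi_div_mul_I_ne_one {N k : ℕ} (hN : N ≠ 0) (hk : ¬ 2 * N ∣ k) :
    cexp (k * (π / N) * I) ≠ 1 := by
  rw [Ne, Complex.exp_eq_one_iff]
  rintro ⟨n, hn⟩
  have hreal : k * (π / N) = n * (2 * π) := Complex.ofReal_injective <|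
    mul_right_cancel₀ Complex.I_ne_zero (by push_cast; linear_combination hn)
  have hkn : (k : ℝ) = 2 * N * n := by
    field_simp at hreal
    linarith
  exact hk (Int.natCast_dvd_natCast.1 ⟨n, by exact_mod_cast hkn⟩)

theorem integral_abs_cos_mul_cexp_eq_zero {N k : ℕ} (hN : N ≠ 0) (hk : ¬ 2 * N ∣ k) :
    ∫ θ in -π..π, (|cos (N * θ)| : ℝ) * cexp (k * θ * I) = 0 := by
  let φ : ℝ → ℂ := fun θ => (|cos (N * θ)| : ℝ) * cexp (k * θ * I)
  have hperiodic : Function.Periodic φ (2 * π) := fun θ => by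
    have hexp : cexp (k * ↑(θ + 2 * π) * I) = cexp (k * θ * I) := by
      rw [Complex.ofReal_add, mul_add, add_mul, Complex.exp_add]
      push_cast
      rw [show (k : ℂ) * (2 * π) * I = k * (2 * π * I) by ring,
        Complex.exp_nat_mul_two_pi_mul_I, mul_one]
    simp only [φ, mul_add, cos_add_nat_mul_two_pi, hexp]
  have hshift : ∀ θ, φ (θ + π / N) = cexp (k * (π / N) * I) • φ θ := fun θ => by
    have hcos : |cos (N * (θ + π / N))| = |cos (N * θ)| := by
      rw [mul_add, mul_div_cancel₀ _ (Nat.cast_ne_zero.2 hN), cos_add_pi, abs_neg]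
    simp only [φ, hcos, smul_eq_mul]
    rw [mul_left_comm, ← Complex.exp_add]
    push_cast
    ring_nf
  simpa [φ, show -π + 2 * π = π by ring] using
    hperiodic.intervalIntegral_eq_zero_of_add_eq_smul hshift
      (cexp_nat_mul_pi_div_mul_I_ne_one hN hk) (-π)

theorem integral_abs_cos_nat_mul_mul_cos_nat_mul {N k : ℕ} (hN : N ≠ 0) (hk : ¬ 2 * N ∣ k) :
    ∫ θ in 0..π, |cos (N * θ)| * cos (k * θ) = 0 := by
  have hcont : Continuous fun θ : ℝ => |cos (N * θ)| * cos (k * θ) := by fun_prop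
  have hsymm : ∫ θ in -π..π, |cos (N * θ)| * cos (k * θ) = 0 := by
    have hre := intervalIntegral_re (𝕜 := ℂ) (μ := volume) (a := -π) (b := π)
      (f := fun θ : ℝ => ((|cos (N * θ)| : ℝ) : ℂ) * cexp (k * θ * I))
      (by apply Continuous.intervalIntegrable; fun_prop)
    rw [integral_abs_cos_mul_cexp_eq_zero hN hk] at hre
    simpa [← Complex.ofReal_natCast, ← Complex.ofReal_mul, Complex.exp_ofReal_mul_I_re]
      using hre
  rw [integral_neg_self_eq_two_mul_of_even (fun θ => by simp only [mul_neg, cos_neg])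
    (hcont.intervalIntegrable _ _)] at hsymm
  linarith

/-- With `f x = ReLU (T_N x)` and `g x = 1/π + T_N x / 2`, for every `k ≤ N` the
difference `f - g` is orthogonal to `T_k` for the Chebyshev weight `(1-x²)^{-1/2}` on `[-1,1]`;
i.e., `g` is the Chebyshev-weighted orthogonal projection of `f` onto `span {T₀, …, T_N}`. -/
theorem relu_chebyshev_low_modes_projection (N : ℕ) (hN : 1 ≤ N) (f g : ℝ → ℝ)
    (hf : ∀ x, f x = max ((Polynomial.Chebyshev.T ℝ N).eval x) 0)
    (hg : ∀ x, g x = 1 / π + (Polynomial.Chebyshev.T ℝ N).eval x / 2) :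
    ∀ k : ℕ, k ≤ N →
      (∫ x in (-1 : ℝ)..1,
        (f x - g x) * (Polynomial.Chebyshev.T ℝ k).eval x * (1 - x ^ 2) ^ (-(1 : ℝ) / 2)) = 0 := by
  intro k hk
  have hN0 : N ≠ 0 := Nat.one_le_iff_ne_zero.1 hN
  have hpointwise : ∀ θ, (f (cos θ) - g (cos θ)) * (Chebyshev.T ℝ k).eval (cos θ)
      = |cos (N * θ)| * cos (k * θ) / 2 - cos (k * θ) / π := by
    intro θ
    simp only [hf, hg, Chebyshev.T_real_cos, Int.cast_natCast]
    rcases le_total (cos (N * θ)) 0 with h | h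
    · rw [max_eq_right h, abs_of_nonpos h]; ring
    · rw [max_eq_left h, abs_of_nonneg h]; ring
  rw [integral_mul_chebyshev_weight_eq_integral_comp_cos, integral_congr fun θ _ => hpointwise θ,
    intervalIntegral.integral_sub (by apply Continuous.intervalIntegrable; fun_prop)
      (by apply Continuous.intervalIntegrable; fun_prop), intervalIntegral.integral_div,
    intervalIntegral.integral_div]
  rcases eq_or_ne k 0 with rfl | hk0
  · simp [integral_abs_cos_nat_mul hN0, pi_ne_zero]
  · have hkN : ¬ 2 * N ∣ k := Nat.not_dvd_of_pos_of_lt (Nat.pos_of_ne_zero hk0) (by omega)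
    rw [integral_abs_cos_nat_mul_mul_cos_nat_mul hN0 hkN, integral_cos_nat_mul hk0]
    simp
end

section
/- Let N ≥ 1 be an integer. For every x ∈ [-1, 1], ReLU(T_N(x)) = 1/π + T_N(x)/2 + Σ_{m=1}^{∞} (2/π)·((−1)^{m+1}/(4m²−1))·T_{2mN}(x), the series converging absolutely and uniformly on [-1,1]. -/
/-!
The power series `g z = ∑ₘ (-1)ᵐ z^(2m+2) / (4(m+1)² - 1)` satisfies
`2 z g z = (z² + 1) arctan z - z` on the open unit disc, by comparing coefficients with the
arctangent series. Its coefficients are absolutely summable, so `g` is continuous on the closed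
disc and the identity persists at every `z = e^{it}` with `cos t ≠ 0`, where `arctan` is
continuous. There `z² + 1 = 2 cos t · z` and `Re arctan z = ± π/4`, and taking real parts gives
the Fourier series `∑ₘ (-1)ᵐ cos(2(m+1)t) / (4(m+1)² - 1) = π |cos t| / 4 - 1/2`; at the
zeros of `cos` it is the telescoping sum `∑ 1/(4(m+1)² - 1) = 1/2`. Substituting
`t = N arccos x`, using `T_k (cos θ) = cos (k θ)` and `max c 0 = (|c| + c) / 2` gives the
theorem.
-/

open Real Filter Polynomial Topology

noncomputable def absCosCoeff (m : ℕ) : ℝ := (-1) ^ m / (4 * ((m : ℝ) + 1) ^ 2 - 1)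

lemma four_mul_succ_sq_sub_one_pos (m : ℕ) : 0 < 4 * ((m : ℝ) + 1) ^ 2 - 1 := by
  nlinarith [m.cast_nonneg (α := ℝ)]

lemma abs_absCosCoeff (m : ℕ) : |absCosCoeff m| = 1 / (4 * ((m : ℝ) + 1) ^ 2 - 1) := by
  rw [absCosCoeff, abs_div, abs_neg_one_pow, abs_of_pos (four_mul_succ_sq_sub_one_pos m)]

lemma sum_range_one_div_four_mul_succ_sq_sub_one (n : ℕ) :
    ∑ m ∈ Finset.range n, 1 / (4 * ((m : ℝ) + 1) ^ 2 - 1) = (n : ℝ) / (2 * n + 1) := by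
  induction n with
  | zero => simp
  | succ n ih =>
    have := four_mul_succ_sq_sub_one_pos n
    rw [Finset.sum_range_succ, ih]
    push_cast
    field_simp
    ring

lemma hasSum_one_div_four_mul_succ_sq_sub_one :
    HasSum (fun m : ℕ => 1 / (4 * ((m : ℝ) + 1) ^ 2 - 1)) (1 / 2) := by
  refine (hasSum_iff_tendsto_nat_of_nonneg
    (fun m => (one_div_pos.2 (four_mul_succ_sq_sub_one_pos m)).le) _).2 ?_
  simp_rw [sum_range_one_div_four_mul_succ_sq_sub_one]
  convert (tendsto_natCast_div_add_atTop (1 / 2 : ℝ)).div_const 2 using 2 with n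
  field_simp

lemma summable_one_div_four_mul_succ_sq_sub_one :
    Summable (fun m : ℕ => 1 / (4 * ((m : ℝ) + 1) ^ 2 - 1)) :=
  hasSum_one_div_four_mul_succ_sq_sub_one.summable

lemma norm_absCosCoeff_mul_pow_le {z : ℂ} (hz : ‖z‖ ≤ 1) (m : ℕ) :
    ‖(absCosCoeff m : ℂ) * z ^ (2 * (m + 1))‖ ≤ 1 / (4 * ((m : ℝ) + 1) ^ 2 - 1) := by
  rw [norm_mul, Complex.norm_real, Real.norm_eq_abs, abs_absCosCoeff, norm_pow]
  exact mul_le_of_le_one_right (one_div_pos.2 (four_mul_succ_sq_sub_one_pos m)).le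
    (pow_le_one₀ (norm_nonneg z) hz)

noncomputable def absCosSeries (z : ℂ) : ℂ := ∑' m, (absCosCoeff m : ℂ) * z ^ (2 * (m + 1))

lemma hasSum_absCosSeries {z : ℂ} (hz : ‖z‖ ≤ 1) :
    HasSum (fun m => (absCosCoeff m : ℂ) * z ^ (2 * (m + 1))) (absCosSeries z) :=
  (summable_one_div_four_mul_succ_sq_sub_one.of_norm_bounded
    (norm_absCosCoeff_mul_pow_le hz)).hasSum

lemma continuousOn_absCosSeries : ContinuousOn absCosSeries (Metric.closedBall 0 1) :=
  continuousOn_tsum (fun _ => by fun_prop) summable_one_div_four_mul_succ_sq_sub_one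
    fun m _ hz => norm_absCosCoeff_mul_pow_le (mem_closedBall_zero_iff.1 hz) m

lemma two_mul_mul_absCosSeries_of_norm_lt_one {z : ℂ} (hz : ‖z‖ < 1) :
    2 * z * absCosSeries z = (z ^ 2 + 1) * Complex.arctan z - z := by
  set a : ℕ → ℂ := fun n => (-1) ^ n * z ^ (2 * n + 1) / ((2 * n + 1 : ℕ) : ℂ)
  have harctan : HasSum a (Complex.arctan z) := Complex.hasSum_arctan hz
  have harctan_succ : HasSum (fun n => a (n + 1)) (Complex.arctan z - z) := by
    simpa [a] using (hasSum_nat_add_iff' 1).2 harctan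
  -- `1 / (2n+1) - 1 / (2n+3) = 2 / ((2n+1)(2n+3)) = 2 / (4(n+1)² - 1)`
  have hterm : ∀ n, z ^ 2 * a n + a (n + 1) =
      2 * z * ((absCosCoeff n : ℂ) * z ^ (2 * (n + 1))) := by
    intro n
    have h₁ : (2 * (n : ℂ) + 1) ≠ 0 := by norm_cast
    have h₂ : (2 * ((n : ℂ) + 1) + 1) ≠ 0 := by norm_cast
    have h₃ : 4 * ((n : ℂ) + 1) ^ 2 - 1 = (2 * n + 1) * (2 * (n + 1) + 1) := by ring
    simp only [a, absCosCoeff]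
    push_cast
    rw [h₃]
    field_simp
    ring
  have := (harctan.mul_left (z ^ 2)).add harctan_succ
  simp only [hterm] at this
  rw [((hasSum_absCosSeries hz.le).mul_left (2 * z)).unique this]
  ring

namespace Complex

lemma one_sub_mul_I_ne_zero {z : ℂ} (hz : z.re ≠ 0) : 1 - z * I ≠ 0 := by
  intro h
  exact hz (by simpa using congrArg im h)

lemma re_one_add_mul_I_div_one_sub_mul_I (z : ℂ) :
    ((1 + z * I) / (1 - z * I)).re = (1 - z.re ^ 2 - z.im ^ 2) / normSq (1 - z * I) := by
  simp only [div_re, add_re, sub_re, add_im, sub_im, mul_re, mul_im, one_re, one_im, I_re, I_im]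
  ring

lemma im_one_add_mul_I_div_one_sub_mul_I (z : ℂ) :
    ((1 + z * I) / (1 - z * I)).im = 2 * z.re / normSq (1 - z * I) := by
  simp only [div_im, add_re, sub_re, add_im, sub_im, mul_re, mul_im, one_re, one_im, I_re, I_im]
  ring

lemma continuousAt_arctan_of_re_ne_zero {z : ℂ} (hz : z.re ≠ 0) : ContinuousAt arctan z := by
  have him : ((1 + z * I) / (1 - z * I)).im ≠ 0 := by
    rw [im_one_add_mul_I_div_one_sub_mul_I]
    exact div_ne_zero (by simpa using hz) (normSq_pos.2 (one_sub_mul_I_ne_zero hz)).ne'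
  refine continuousAt_const.mul (ContinuousAt.clog ?_ (mem_slitPlane_iff.2 (Or.inr him)))
  exact (continuousAt_const.add (continuousAt_id.mul continuousAt_const)).div
    (continuousAt_const.sub (continuousAt_id.mul continuousAt_const)) (one_sub_mul_I_ne_zero hz)

lemma arctan_re (z : ℂ) : (arctan z).re = arg ((1 + z * I) / (1 - z * I)) / 2 := by
  rw [arctan, mul_re, log_im]
  norm_num
  ring

-- On the unit circle `(1 + z I) / (1 - z I)` is purely imaginary, with the sign of `z.re`.
lemma re_mul_arctan_re_of_norm_eq_one {z : ℂ} (hz : ‖z‖ = 1) :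
    z.re * (arctan z).re = π / 4 * |z.re| := by
  have hre : ((1 + z * I) / (1 - z * I)).re = 0 := by
    have : 1 - z.re ^ 2 - z.im ^ 2 = 0 := by
      rw [← sq_norm_sub_sq_re, hz]
      ring
    rw [re_one_add_mul_I_div_one_sub_mul_I, this, zero_div]
  rw [arctan_re]
  rcases lt_trichotomy z.re 0 with hneg | hzero | hpos
  · have : arg ((1 + z * I) / (1 - z * I)) = -(π / 2) := by
      refine arg_eq_neg_pi_div_two_iff.2 ⟨hre, ?_⟩
      rw [im_one_add_mul_I_div_one_sub_mul_I]
      exact div_neg_of_neg_of_pos (by linarith) (normSq_pos.2 (one_sub_mul_I_ne_zero hneg.ne))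
    rw [this, abs_of_neg hneg]
    ring
  · simp [hzero]
  · have : arg ((1 + z * I) / (1 - z * I)) = π / 2 := by
      refine arg_eq_pi_div_two_iff.2 ⟨hre, ?_⟩
      rw [im_one_add_mul_I_div_one_sub_mul_I]
      exact div_pos (by linarith) (normSq_pos.2 (one_sub_mul_I_ne_zero hpos.ne'))
    rw [this, abs_of_pos hpos]
    ring

end Complex

lemma two_mul_mul_absCosSeries_of_norm_eq_one {z : ℂ} (hz : ‖z‖ = 1) (hre : z.re ≠ 0) :
    2 * z * absCosSeries z = (z ^ 2 + 1) * Complex.arctan z - z := by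
  have : (𝓝[Metric.ball (0 : ℂ) 1] z).NeBot := mem_closure_iff_nhdsWithin_neBot.1 <| by
    rw [closure_ball 0 one_ne_zero, mem_closedBall_zero_iff, hz]
  refine tendsto_nhds_unique_of_eventuallyEq (l := 𝓝[Metric.ball 0 1] z) ?_ ?_
    (eventually_nhdsWithin_of_forall fun w hw =>
      two_mul_mul_absCosSeries_of_norm_lt_one (mem_ball_zero_iff.1 hw))
  · exact ((continuousWithinAt_id.const_mul 2).mul
      (continuousOn_absCosSeries z (by simp [hz]))).tendsto.mono_left
      (nhdsWithin_mono _ Metric.ball_subset_closedBall)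
  · exact ((((continuousAt_id.pow 2).add continuousAt_const).mul
      (Complex.continuousAt_arctan_of_re_ne_zero hre)).sub continuousAt_id).tendsto.mono_left
      nhdsWithin_le_nhds

lemma absCosSeries_of_norm_eq_one {z : ℂ} (hz : ‖z‖ = 1) (hre : z.re ≠ 0) :
    absCosSeries z = z.re * Complex.arctan z - 1 / 2 := by
  have hz₀ : z ≠ 0 := by rintro rfl; simp at hz
  have hsq : z ^ 2 + 1 = 2 * z.re * z := by
    have h₁ : z * (starRingEnd ℂ) z = 1 := by rw [Complex.mul_conj', hz]; simp
    have h₂ := Complex.add_conj z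
    push_cast at h₂
    linear_combination z * h₂ - h₁
  have := two_mul_mul_absCosSeries_of_norm_eq_one hz hre
  rw [hsq] at this
  apply mul_left_cancel₀ (mul_ne_zero two_ne_zero hz₀)
  linear_combination this

lemma cos_two_mul_succ_mul_of_cos_eq_zero {t : ℝ} (ht : cos t = 0) (m : ℕ) :
    cos (2 * (m + 1) * t) = (-1) ^ (m + 1) := by
  have h2t : cos (2 * t) = -1 := by rw [cos_two_mul, ht]; norm_num
  have := Chebyshev.T_real_cos (2 * t) (m + 1 : ℕ)
  rw [h2t, Chebyshev.T_eval_neg_one, Int.cast_negOnePow_natCast] at this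
  rw [this]
  push_cast
  ring_nf

lemma hasSum_absCosCoeff_mul_cos (t : ℝ) :
    HasSum (fun m => absCosCoeff m * cos (2 * (m + 1) * t)) (π * |cos t| / 4 - 1 / 2) := by
  by_cases ht : cos t = 0
  · have hterm : ∀ m : ℕ, absCosCoeff m * cos (2 * (m + 1) * t) =
        -(1 / (4 * ((m : ℝ) + 1) ^ 2 - 1)) := by
      intro m
      rw [cos_two_mul_succ_mul_of_cos_eq_zero ht, absCosCoeff, div_mul_eq_mul_div, ← pow_add,
        Odd.neg_one_pow ⟨m, by ring⟩, neg_div]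
    simpa [hterm, ht] using hasSum_one_div_four_mul_succ_sq_sub_one.neg
  · set z := Complex.exp (t * Complex.I)
    have hz : ‖z‖ = 1 := Complex.norm_exp_ofReal_mul_I t
    have hre : z.re = cos t := Complex.exp_ofReal_mul_I_re t
    have hterm : ∀ m : ℕ, ((absCosCoeff m : ℂ) * z ^ (2 * (m + 1))).re =
        absCosCoeff m * cos (2 * (m + 1) * t) := by
      intro m
      rw [← Complex.exp_nat_mul, Complex.re_ofReal_mul, ← Complex.exp_ofReal_mul_I_re]
      push_cast
      ring_nf
    have hval : (absCosSeries z).re = π * |cos t| / 4 - 1 / 2 := by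
      rw [absCosSeries_of_norm_eq_one hz (hre ▸ ht), Complex.sub_re, Complex.re_ofReal_mul,
        Complex.re_mul_arctan_re_of_norm_eq_one hz, hre]
      norm_num
      ring
    simpa only [hterm, hval] using Complex.hasSum_re (hasSum_absCosSeries hz.le)

lemma Polynomial.Chebyshev.T_real_eval_of_mem_Icc {x : ℝ} (hx : x ∈ Set.Icc (-1 : ℝ) 1)
    (n : ℤ) :
    (T ℝ n).eval x = cos (n * arccos x) := by
  simpa [cos_arccos hx.1 hx.2] using T_real_cos (arccos x) n

noncomputable def reluChebTerm (N m : ℕ) (x : ℝ) : ℝ :=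
  (2 / π) * ((-1 : ℝ) ^ (m + 1 + 1) / (4 * ((m : ℝ) + 1) ^ 2 - 1)) *
    (Polynomial.Chebyshev.T ℝ (2 * ((m : ℤ) + 1) * (N : ℤ))).eval x

lemma reluChebTerm_eq (N m : ℕ) {x : ℝ} (hx : x ∈ Set.Icc (-1 : ℝ) 1) :
    reluChebTerm N m x = 2 / π * (absCosCoeff m * cos (2 * (m + 1) * (N * arccos x))) := by
  rw [reluChebTerm, Chebyshev.T_real_eval_of_mem_Icc hx, absCosCoeff, pow_succ, pow_succ]
  push_cast
  ring_nf

lemma abs_reluChebTerm_le (N m : ℕ) {x : ℝ} (hx : x ∈ Set.Icc (-1 : ℝ) 1) :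
    |reluChebTerm N m x| ≤ 2 / π * (1 / (4 * ((m : ℝ) + 1) ^ 2 - 1)) := by
  rw [reluChebTerm_eq N m hx, abs_mul, abs_mul, abs_absCosCoeff, abs_of_pos (by positivity)]
  gcongr
  exact mul_le_of_le_one_right (one_div_pos.2 (four_mul_succ_sq_sub_one_pos m)).le
    (abs_cos_le_one _)

lemma hasSum_reluChebTerm (N : ℕ) {x : ℝ} (hx : x ∈ Set.Icc (-1 : ℝ) 1) :
    HasSum (fun m => reluChebTerm N m x)
      (max ((Chebyshev.T ℝ N).eval x) 0 - (1 / π + (Chebyshev.T ℝ N).eval x / 2)) := by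
  have hval : 2 / π * (π * |cos (N * arccos x)| / 4 - 1 / 2) =
      max ((Chebyshev.T ℝ N).eval x) 0 - (1 / π + (Chebyshev.T ℝ N).eval x / 2) := by
    have hT := Chebyshev.T_real_eval_of_mem_Icc hx N
    push_cast at hT
    rw [hT]
    rcases le_total (cos (N * arccos x)) 0 with h | h
    · rw [abs_of_nonpos h, max_eq_right h]
      field_simp
      ring
    · rw [abs_of_nonneg h, max_eq_left h]
      field_simp
      ring
  rw [← hval]
  simpa only [reluChebTerm_eq N _ hx] using
    (hasSum_absCosCoeff_mul_cos (N * arccos x)).mul_left (2 / π)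

theorem relu_comp_chebyshev_series_general (N : ℕ) :
    (∀ x ∈ Set.Icc (-1 : ℝ) 1, HasSum
        (fun m : ℕ => (2 / π) * ((-1 : ℝ) ^ (m + 1 + 1) / (4 * ((m : ℝ) + 1) ^ 2 - 1)) *
          (Polynomial.Chebyshev.T ℝ (2 * ((m : ℤ) + 1) * (N : ℤ))).eval x)
        (max ((Polynomial.Chebyshev.T ℝ N).eval x) 0 -
          (1 / π + (Polynomial.Chebyshev.T ℝ N).eval x / 2))) ∧
    (∀ x ∈ Set.Icc (-1 : ℝ) 1, Summable
        (fun m : ℕ => |(2 / π) * ((-1 : ℝ) ^ (m + 1 + 1) / (4 * ((m : ℝ) + 1) ^ 2 - 1)) *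
          (Polynomial.Chebyshev.T ℝ (2 * ((m : ℤ) + 1) * (N : ℤ))).eval x|)) ∧
    TendstoUniformlyOn
      (fun n : ℕ => fun x : ℝ => ∑ m ∈ Finset.range n,
        (2 / π) * ((-1 : ℝ) ^ (m + 1 + 1) / (4 * ((m : ℝ) + 1) ^ 2 - 1)) *
          (Polynomial.Chebyshev.T ℝ (2 * ((m : ℤ) + 1) * (N : ℤ))).eval x)
      (fun x : ℝ => max ((Polynomial.Chebyshev.T ℝ N).eval x) 0 -
        (1 / π + (Polynomial.Chebyshev.T ℝ N).eval x / 2)) atTop (Set.Icc (-1 : ℝ) 1) := by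
  have hbound : Summable fun m : ℕ => 2 / π * (1 / (4 * ((m : ℝ) + 1) ^ 2 - 1)) :=
    summable_one_div_four_mul_succ_sq_sub_one.mul_left _
  refine ⟨fun x hx => hasSum_reluChebTerm N hx, fun x hx => ?_, ?_⟩
  · exact hbound.of_nonneg_of_le (fun _ => abs_nonneg _) fun m => abs_reluChebTerm_le N m hx
  · exact (tendstoUniformlyOn_tsum_nat hbound fun m x hx =>
      abs_reluChebTerm_le N m hx).congr_right fun x hx => (hasSum_reluChebTerm N hx).tsum_eq

/-- For `N ≥ 1` and every `x ∈ [-1,1]`,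
`ReLU (T_N x) = 1/π + T_N x / 2 + ∑_{m=1}^∞ (2/π) · ((-1)^{m+1}/(4m²-1)) · T_{2mN}(x)`,
the series converging absolutely and uniformly on `[-1,1]`. -/
theorem relu_comp_chebyshev_series (N : ℕ) (hN : 1 ≤ N) :
    (∀ x ∈ Set.Icc (-1 : ℝ) 1, HasSum
        (fun m : ℕ => (2 / π) * ((-1 : ℝ) ^ (m + 1 + 1) / (4 * ((m : ℝ) + 1) ^ 2 - 1)) *
          (Polynomial.Chebyshev.T ℝ (2 * ((m : ℤ) + 1) * (N : ℤ))).eval x)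
        (max ((Polynomial.Chebyshev.T ℝ N).eval x) 0 -
          (1 / π + (Polynomial.Chebyshev.T ℝ N).eval x / 2))) ∧
    (∀ x ∈ Set.Icc (-1 : ℝ) 1, Summable
        (fun m : ℕ => |(2 / π) * ((-1 : ℝ) ^ (m + 1 + 1) / (4 * ((m : ℝ) + 1) ^ 2 - 1)) *
          (Polynomial.Chebyshev.T ℝ (2 * ((m : ℤ) + 1) * (N : ℤ))).eval x|)) ∧
    TendstoUniformlyOn
      (fun n : ℕ => fun x : ℝ => ∑ m ∈ Finset.range n,
        (2 / π) * ((-1 : ℝ) ^ (m + 1 + 1) / (4 * ((m : ℝ) + 1) ^ 2 - 1)) *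
          (Polynomial.Chebyshev.T ℝ (2 * ((m : ℤ) + 1) * (N : ℤ))).eval x)
      (fun x : ℝ => max ((Polynomial.Chebyshev.T ℝ N).eval x) 0 -
        (1 / π + (Polynomial.Chebyshev.T ℝ N).eval x / 2)) atTop (Set.Icc (-1 : ℝ) 1) :=
  relu_comp_chebyshev_series_general N
end

section
/- Let N ≥ 1 be an integer, f(x) = ReLU(cos(πNx)) and g(x) = 1/π + cos(πNx)/2 on [-1,1]. Then ∫_{-1}^{1} (f(x) − g(x))² dx = (π² − 8)/(4π²). -/
open Real intervalIntegral

/-! Since `max c 0 - c / 2 = |c| / 2`, the integrand is `φ (π N x)` with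
`φ t = (|cos t| / 2 - 1 / π) ^ 2`, which is `π`-periodic. Over `[-1, 1]` the function
`x ↦ φ (π N x)` runs through `2N` periods, so its integral is `2 / π` times the integral of `φ`
over one period, and on `[-π/2, π/2]`, where `cos ≥ 0`, that integral is elementary. -/

lemma max_zero_sub_half_self {α : Type*} [Field α] [LinearOrder α] [IsStrictOrderedRing α]
    (a : α) : max a 0 - a / 2 = |a| / 2 := by
  rcases le_total a 0 with ha | ha
  · rw [max_eq_right ha, abs_of_nonpos ha]; ring
  · rw [max_eq_left ha, abs_of_nonneg ha]; ring

lemma Function.Periodic.intervalIntegral_comp_mul_natCast_neg_one_one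
    {E : Type*} [NormedAddCommGroup E] [NormedSpace ℝ E] {h : ℝ → E} {T : ℝ}
    (hper : Function.Periodic h T) (hT : T ≠ 0) (hcont : Continuous h) {N : ℕ} (hN : N ≠ 0)
    (a : ℝ) :
    ∫ x in (-1 : ℝ)..1, h (T * N * x) = (2 / T) • ∫ t in a..a + T, h t := by
  have hTN : T * N ≠ 0 := mul_ne_zero hT (Nat.cast_ne_zero.mpr hN)
  have hend : T * N * (-1) + (2 * N : ℤ) • T = T * N * 1 := by
    rw [zsmul_eq_mul]; push_cast; ring
  rw [integral_comp_mul_left h hTN, ← hend,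
    hper.intervalIntegral_add_zsmul_eq _ _ fun _ _ => hcont.intervalIntegrable _ _,
    hper.intervalIntegral_add_eq _ a, ← Int.cast_smul_eq_zsmul ℝ, smul_smul]
  congr 1
  push_cast
  field_simp

lemma integral_sq_half_cos_sub_inv_pi :
    ∫ t in (-(π / 2))..(-(π / 2) + π), (Real.cos t / 2 - 1 / π) ^ 2 = π / 8 - 1 / π := by
  have hexpand : ∀ t, (Real.cos t / 2 - 1 / π) ^ 2
      = Real.cos t ^ 2 / 4 - Real.cos t * (1 / π) + 1 / π ^ 2 := fun t => by ring
  have hcont : Continuous fun t => Real.cos t ^ 2 / 4 := by fun_prop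
  have hcont' : Continuous fun t => Real.cos t * (1 / π) := by fun_prop
  have hcont'' : Continuous fun t => Real.cos t ^ 2 / 4 - Real.cos t * (1 / π) := by fun_prop
  simp only [hexpand]
  rw [integral_add (hcont''.intervalIntegrable _ _) intervalIntegrable_const,
    integral_sub (hcont.intervalIntegrable _ _) (hcont'.intervalIntegrable _ _),
    integral_div, integral_mul_const, integral_const, integral_cos_sq, integral_cos]
  simp only [show -(π / 2) + π = π / 2 by ring, cos_pi_div_two, sin_pi_div_two, sin_neg,
    cos_neg, smul_eq_mul]
  field_simp
  ring

/-- For `f x = ReLU(cos(πNx))` and `g x = 1/π + cos(πNx)/2`,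
`∫_{-1}^{1} (f x - g x)² dx = (π² - 8)/(4π²)`. -/
theorem integral_aliased_part_sq (N : ℕ) (hN : 1 ≤ N) (f g : ℝ → ℝ)
    (hf : ∀ x, f x = max (Real.cos (π * N * x)) 0)
    (hg : ∀ x, g x = 1 / π + Real.cos (π * N * x) / 2) :
    (∫ x in (-1 : ℝ)..1, (f x - g x) ^ 2) = (π ^ 2 - 8) / (4 * π ^ 2) := by
  set φ : ℝ → ℝ := fun t => (|Real.cos t| / 2 - 1 / π) ^ 2
  have hfg : ∀ x, (f x - g x) ^ 2 = φ (π * N * x) := fun x => by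
    simp only [φ]; rw [hf, hg, ← max_zero_sub_half_self]; ring
  have hper : Function.Periodic φ π := fun t => by simp only [φ, cos_add_pi, abs_neg]
  have hφ : ∫ t in (-(π / 2))..(-(π / 2) + π), φ t = π / 8 - 1 / π := by
    rw [← integral_sq_half_cos_sub_inv_pi]
    refine integral_congr fun t ht => ?_
    rw [Set.uIcc_of_le (by linarith [pi_pos])] at ht
    simp only [φ, abs_of_nonneg (cos_nonneg_of_mem_Icc ⟨ht.1, by linarith [ht.2]⟩)]
  simp only [hfg]
  rw [hper.intervalIntegral_comp_mul_natCast_neg_one_one pi_ne_zero (by fun_prop) (by omega),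
    hφ, smul_eq_mul]
  field_simp
  ring
end

section
/- For all real parameters a and x₀, the function u : ℝ × ℝ → ℝ defined by u(x, t) = 3·(a / cosh(a(x + x₀)/2 − a³t/2))² is smooth and satisfies the Korteweg–de Vries equation ∂_t u + u·∂_x u + ∂³_x u = 0 (equivalently, ∂_t u + (1/2)·∂_x(u²) + ∂³_x u = 0) at every point (x, t) ∈ ℝ². -/
open Real

private lemma kdv_aux1 (a y : ℝ) :
    HasDerivAt (fun y => 3 * a ^ 2 / Real.cosh y ^ 2)
      (-6 * a ^ 2 * Real.sinh y / Real.cosh y ^ 3) y := by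
  have hc := (Real.cosh_pos y).ne'
  have h := (hasDerivAt_const y (3 * a ^ 2)).div ((Real.hasDerivAt_cosh y).pow 2)
    (pow_ne_zero 2 hc)
  refine h.congr_deriv ?_
  simp only [Pi.pow_apply]
  field_simp
  ring

private lemma kdv_aux2 (a y : ℝ) :
    HasDerivAt (fun y => -6 * a ^ 2 * Real.sinh y / Real.cosh y ^ 3)
      (-6 * a ^ 2 / Real.cosh y ^ 2 + 18 * a ^ 2 * Real.sinh y ^ 2 / Real.cosh y ^ 4) y := by
  have hc := (Real.cosh_pos y).ne'
  have h := (((Real.hasDerivAt_sinh y).const_mul (-6 * a ^ 2)).div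
    ((Real.hasDerivAt_cosh y).pow 3) (pow_ne_zero 3 hc))
  refine h.congr_deriv ?_
  simp only [Pi.pow_apply]
  field_simp
  ring

private lemma kdv_aux3 (a y : ℝ) :
    HasDerivAt (fun y => -6 * a ^ 2 / Real.cosh y ^ 2 + 18 * a ^ 2 * Real.sinh y ^ 2 / Real.cosh y ^ 4)
      (48 * a ^ 2 * Real.sinh y / Real.cosh y ^ 3
        - 72 * a ^ 2 * Real.sinh y ^ 3 / Real.cosh y ^ 5) y := by
  have hc := (Real.cosh_pos y).ne'
  have h1 := (hasDerivAt_const y (-6 * a ^ 2)).div ((Real.hasDerivAt_cosh y).pow 2)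
    (pow_ne_zero 2 hc)
  have h2 := (((Real.hasDerivAt_sinh y).pow 2).const_mul (18 * a ^ 2)).div
    ((Real.hasDerivAt_cosh y).pow 4) (pow_ne_zero 4 hc)
  have h := h1.add h2
  refine h.congr_deriv ?_
  simp only [Pi.pow_apply]
  have hs : Real.sinh y ^ 2 = Real.cosh y ^ 2 - 1 := Real.sinh_sq y
  rw [show Real.sinh y ^ 3 = Real.sinh y ^ 2 * Real.sinh y from by ring_nf, hs]
  field_simp
  ring

/-- The single-soliton profile
`u(x,t) = 3 (a / cosh(a(x+x₀)/2 - a³t/2))²` is smooth on `ℝ × ℝ` and satisfies the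
Korteweg–de Vries equation `∂ₜu + u ∂ₓu + ∂ₓ³u = 0` at every point. -/
theorem kdv_single_soliton (a x₀ : ℝ) (u : ℝ → ℝ → ℝ)
    (hu : ∀ x t, u x t = 3 * (a / Real.cosh (a * (x + x₀) / 2 - a ^ 3 * t / 2)) ^ 2) :
    ContDiff ℝ (⊤ : ℕ∞) (fun p : ℝ × ℝ => u p.1 p.2) ∧
    ∀ x t : ℝ,
      deriv (fun s => u x s) t + u x t * deriv (fun z => u z t) x +
        iteratedDeriv 3 (fun z => u z t) x = 0 := by
  have hu' : ∀ x t, u x t = 3 * a ^ 2 / Real.cosh (a * (x + x₀) / 2 - a ^ 3 * t / 2) ^ 2 := by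
    intro x t
    rw [hu, div_pow]
    ring
  constructor
  · have h1 : ContDiff ℝ (⊤ : ℕ∞) (fun p : ℝ × ℝ => a * (p.1 + x₀) / 2 - a ^ 3 * p.2 / 2) :=
      ((contDiff_const.mul (contDiff_fst.add contDiff_const)).div_const 2).sub
        ((contDiff_const.mul contDiff_snd).div_const 2)
    have h2 := Real.contDiff_cosh.comp h1
    have h3 : ContDiff ℝ (⊤ : ℕ∞) (fun p : ℝ × ℝ =>
        3 * a ^ 2 / Real.cosh (a * (p.1 + x₀) / 2 - a ^ 3 * p.2 / 2) ^ 2) :=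
      contDiff_const.div (h2.pow 2) (fun p => pow_ne_zero 2 (Real.cosh_pos _).ne')
    convert h3 using 2 with p
    exact hu' p.1 p.2
  · intro x t
    set φ : ℝ → ℝ := fun z => a * (z + x₀) / 2 - a ^ 3 * t / 2 with hφdef
    have hφ : ∀ z, HasDerivAt φ (a / 2) z := by
      intro z
      have : HasDerivAt (fun z : ℝ => a * (z + x₀) / 2 - a ^ 3 * t / 2) (a / 2) z := by
        have h := (((hasDerivAt_id z).add_const x₀).const_mul a).div_const 2
        simpa using h.sub_const (a ^ 3 * t / 2)
      exact this
    have hψ : HasDerivAt (fun s : ℝ => a * (x + x₀) / 2 - a ^ 3 * s / 2) (-(a ^ 3) / 2) t := by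
      have h := ((hasDerivAt_id t).const_mul (a ^ 3)).div_const 2
      exact ((hasDerivAt_const t (a * (x + x₀) / 2)).sub h).congr_deriv (by ring)
    set y := a * (x + x₀) / 2 - a ^ 3 * t / 2 with hy
    -- time derivative
    have hut : (fun s => u x s) = fun s => 3 * a ^ 2 / Real.cosh (a * (x + x₀) / 2 - a ^ 3 * s / 2) ^ 2 := by
      funext s; exact hu' x s
    have hT : deriv (fun s => u x s) t
        = -6 * a ^ 2 * Real.sinh y / Real.cosh y ^ 3 * (-(a ^ 3) / 2) := by
      rw [hut]
      exact ((kdv_aux1 a y).comp t hψ).deriv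
    -- spatial derivatives
    have hux : (fun z => u z t) = fun z => 3 * a ^ 2 / Real.cosh (φ z) ^ 2 := by
      funext z; exact hu' z t
    have hD1 : deriv (fun z => u z t)
        = fun z => -6 * a ^ 2 * Real.sinh (φ z) / Real.cosh (φ z) ^ 3 * (a / 2) := by
      funext z
      rw [hux]
      exact ((kdv_aux1 a (φ z)).comp z (hφ z)).deriv
    have hD2 : deriv (fun z => -6 * a ^ 2 * Real.sinh (φ z) / Real.cosh (φ z) ^ 3 * (a / 2))
        = fun z => (-6 * a ^ 2 / Real.cosh (φ z) ^ 2
            + 18 * a ^ 2 * Real.sinh (φ z) ^ 2 / Real.cosh (φ z) ^ 4) * (a / 2) * (a / 2) := by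
      funext z
      exact (((kdv_aux2 a (φ z)).comp z (hφ z)).mul_const (a / 2)).deriv
    have hD3 : deriv (fun z => (-6 * a ^ 2 / Real.cosh (φ z) ^ 2
            + 18 * a ^ 2 * Real.sinh (φ z) ^ 2 / Real.cosh (φ z) ^ 4) * (a / 2) * (a / 2))
        = fun z => (48 * a ^ 2 * Real.sinh (φ z) / Real.cosh (φ z) ^ 3
            - 72 * a ^ 2 * Real.sinh (φ z) ^ 3 / Real.cosh (φ z) ^ 5) * (a / 2) * (a / 2) * (a / 2) := by
      funext z
      exact ((((kdv_aux3 a (φ z)).comp z (hφ z)).mul_const (a / 2)).mul_const (a / 2)).deriv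
    have h3 : iteratedDeriv 3 (fun z => u z t) x
        = (48 * a ^ 2 * Real.sinh y / Real.cosh y ^ 3
            - 72 * a ^ 2 * Real.sinh y ^ 3 / Real.cosh y ^ 5) * (a / 2) * (a / 2) * (a / 2) := by
      have : iteratedDeriv 3 (fun z => u z t) = deriv (deriv (deriv (fun z => u z t))) := by
        rw [show (3 : ℕ) = 2 + 1 from rfl, iteratedDeriv_succ,
          show (2 : ℕ) = 1 + 1 from rfl, iteratedDeriv_succ, iteratedDeriv_one]
      rw [this, hD1, hD2, hD3]
    rw [hT, hD1, h3, hu' x t]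
    simp only [hφdef]
    have hs : Real.sinh y ^ 2 = Real.cosh y ^ 2 - 1 := Real.sinh_sq y
    have hc := (Real.cosh_pos y).ne'
    rw [show Real.sinh (a * (x + x₀) / 2 - a ^ 3 * t / 2) ^ 3
        = Real.sinh (a * (x + x₀) / 2 - a ^ 3 * t / 2) ^ 2
          * Real.sinh (a * (x + x₀) / 2 - a ^ 3 * t / 2) from by ring_nf, hs]
    rw [← hy]
    field_simp
    ring_nf
end
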